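/- arXiv:gr-qc/0703033 — 2 statements merged into one kernel-verified Lean document; each statement's English description precedes it below -/
import Mathlib

section
/- Let ρ : ℝ³ → ℝ be nonnegative, measurable, axisymmetric about the x₃-axis, integrable with total mass M, and suppose there exist x₀ ∈ ℝ³ and δ₀ > 0 such that ∫_{B₁(x₀)} ρ dx ≥ δ₀. Then r(x₀) := √(x₀₁² + x₀₂²) ≤ C·M/δ₀ for some universal constant C > 0. -/
open MeasureTheory Real

noncomputable def rot3 (θ : ℝ) (x : EuclideanSpace ℝ (Fin 3)) : EuclideanSpace ℝ (Fin 3) :=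
  WithLp.toLp 2 ![Real.cos θ * x 0 - Real.sin θ * x 1, Real.sin θ * x 0 + Real.cos θ * x 1, x 2]

lemma rot3_zero (θ x) : rot3 θ x 0 = cos θ * x 0 - sin θ * x 1 := rfl
lemma rot3_one (θ x) : rot3 θ x 1 = sin θ * x 0 + cos θ * x 1 := rfl
lemma rot3_two (θ x) : rot3 θ x 2 = x 2 := rfl

lemma rot3_norm (θ : ℝ) (x : EuclideanSpace ℝ (Fin 3)) : ‖rot3 θ x‖ = ‖x‖ := by
  have h := sin_sq_add_cos_sq θ
  rw [EuclideanSpace.norm_eq, EuclideanSpace.norm_eq]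
  congr 1
  simp only [Fin.sum_univ_three, Real.norm_eq_abs, sq_abs, rot3_zero, rot3_one, rot3_two]
  linear_combination (x 0 ^ 2 + x 1 ^ 2) * h

lemma rot3_sq (θ : ℝ) (x : EuclideanSpace ℝ (Fin 3)) :
    rot3 θ x 0 ^ 2 + rot3 θ x 1 ^ 2 = x 0 ^ 2 + x 1 ^ 2 := by
  have h := sin_sq_add_cos_sq θ
  rw [rot3_zero, rot3_one]
  linear_combination (x 0 ^ 2 + x 1 ^ 2) * h

lemma rot3_id (x : EuclideanSpace ℝ (Fin 3)) : rot3 0 x = x := by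
  ext i; fin_cases i <;> simp [rot3_zero, rot3_one, rot3_two]

lemma rot3_rot3 (a b : ℝ) (x : EuclideanSpace ℝ (Fin 3)) :
    rot3 a (rot3 b x) = rot3 (a + b) x := by
  ext i
  fin_cases i <;>
    simp [rot3_zero, rot3_one, rot3_two, Real.cos_add, Real.sin_add] <;> ring

noncomputable def rotE (θ : ℝ) : EuclideanSpace ℝ (Fin 3) ≃ₗᵢ[ℝ] EuclideanSpace ℝ (Fin 3) where
  toLinearEquiv :=
  { toFun := rot3 θ
    invFun := rot3 (-θ)
    map_add' := by
      intro x y; ext i; fin_cases i <;>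
        simp [rot3_zero, rot3_one, rot3_two, PiLp.add_apply] <;> ring
    map_smul' := by
      intro c x; ext i; fin_cases i <;>
        simp [rot3_zero, rot3_one, rot3_two, PiLp.smul_apply, smul_eq_mul] <;> ring
    left_inv := by
      intro x
      show rot3 (-θ) (rot3 θ x) = x
      rw [rot3_rot3, neg_add_cancel, rot3_id]
    right_inv := by
      intro x
      show rot3 θ (rot3 (-θ) x) = x
      rw [rot3_rot3, add_neg_cancel, rot3_id] }
  norm_map' := rot3_norm θ

lemma rotE_apply (θ : ℝ) (x : EuclideanSpace ℝ (Fin 3)) : rotE θ x = rot3 θ x := rfl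

lemma dist_rot3_self (φ : ℝ) (x : EuclideanSpace ℝ (Fin 3)) :
    dist (rot3 φ x) x = 2 * Real.sqrt (x 0 ^ 2 + x 1 ^ 2) * |sin (φ / 2)| := by
  have h1 : Real.cos φ = 1 - 2 * Real.sin (φ / 2) ^ 2 := by
    have a := Real.cos_two_mul (φ / 2)
    have b := sin_sq_add_cos_sq (φ / 2)
    have c : (2 : ℝ) * (φ / 2) = φ := by ring
    rw [c] at a; linarith
  have hc := sin_sq_add_cos_sq φ
  rw [EuclideanSpace.dist_eq]
  have hS : ∑ i, dist (rot3 φ x i) (x i) ^ 2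
      = (x 0 ^ 2 + x 1 ^ 2) * (2 * Real.sin (φ / 2)) ^ 2 := by
    simp only [Fin.sum_univ_three, Real.dist_eq, sq_abs, rot3_zero, rot3_one, rot3_two]
    linear_combination (x 0 ^ 2 + x 1 ^ 2) * hc - 2 * (x 0 ^ 2 + x 1 ^ 2) * h1
  rw [hS, Real.sqrt_mul (by positivity), Real.sqrt_sq_eq_abs, abs_mul]
  norm_num
  ring

lemma dist_rot3_rot3 (a b : ℝ) (x : EuclideanSpace ℝ (Fin 3)) :
    dist (rot3 a x) (rot3 b x)
      = 2 * Real.sqrt (x 0 ^ 2 + x 1 ^ 2) * |sin ((a - b) / 2)| := by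
  have : rot3 a x = rot3 (a - b) (rot3 b x) := by rw [rot3_rot3]; ring_nf
  rw [this, dist_rot3_self, rot3_sq]

lemma integral_ball_rot (ρ : EuclideanSpace ℝ (Fin 3) → ℝ)
    (hax : ∀ x y : EuclideanSpace ℝ (Fin 3),
      (x 0) ^ 2 + (x 1) ^ 2 = (y 0) ^ 2 + (y 1) ^ 2 → x 2 = y 2 → ρ x = ρ y)
    (θ : ℝ) (x₀ : EuclideanSpace ℝ (Fin 3)) :
    ∫ x in Metric.ball (rot3 θ x₀) 1, ρ x = ∫ x in Metric.ball x₀ 1, ρ x := by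
  have him : Metric.ball ((rotE θ) x₀) 1 = (rotE θ) '' Metric.ball x₀ 1 :=
    ((rotE θ).image_ball x₀ 1).symm
  have hrw : ∀ x, ρ (rotE θ x) = ρ x := fun x => hax _ _ (rot3_sq θ x) rfl
  rw [show rot3 θ x₀ = rotE θ x₀ from rfl, him,
    (rotE θ).measurePreserving.setIntegral_image_emb
      (rotE θ).toHomeomorph.measurableEmbedding ρ _]
  simp only [hrw]

/-- If an axisymmetric nonnegative density of total mass M has mass at least δ₀
    in some unit ball centered at x₀, then the cylindrical radius of x₀ is
    at most C·M/δ₀ for a universal constant C. -/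
theorem axisymmetric_mass_bounds_radius :
    ∃ C : ℝ, 0 < C ∧
      ∀ (ρ : EuclideanSpace ℝ (Fin 3) → ℝ) (M δ₀ : ℝ) (x₀ : EuclideanSpace ℝ (Fin 3)),
        (∀ x, 0 ≤ ρ x) →
        (∀ x y : EuclideanSpace ℝ (Fin 3),
          (x 0) ^ 2 + (x 1) ^ 2 = (y 0) ^ 2 + (y 1) ^ 2 → x 2 = y 2 → ρ x = ρ y) →
        Integrable ρ →
        (∫ x, ρ x) = M →
        0 < δ₀ →
        δ₀ ≤ ∫ x in Metric.ball x₀ 1, ρ x →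
        Real.sqrt ((x₀ 0) ^ 2 + (x₀ 1) ^ 2) ≤ C * M / δ₀ := by
  refine ⟨2, by norm_num, ?_⟩
  intro ρ M δ₀ x₀ hρ0 hax hint hM hδpos hball
  have hr0 : (0:ℝ) ≤ Real.sqrt (x₀ 0 ^ 2 + x₀ 1 ^ 2) := Real.sqrt_nonneg _
  set r := Real.sqrt (x₀ 0 ^ 2 + x₀ 1 ^ 2) with hrdef
  have hδM : δ₀ ≤ M := by
    refine hball.trans ?_
    rw [← hM]
    exact setIntegral_le_integral hint (Filter.Eventually.of_forall hρ0)
  have h1le : (1:ℝ) ≤ M / δ₀ := (one_le_div hδpos).2 hδM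
  have hfin : 2 * M / δ₀ = 2 * (M / δ₀) := by ring
  by_cases hr2 : r ≤ 2
  · calc r ≤ 2 := hr2
      _ ≤ 2 * (M / δ₀) := by linarith
      _ = 2 * M / δ₀ := by ring
  push_neg at hr2
  set n := ⌊r⌋₊ with hn
  have hn2 : 2 ≤ n := Nat.le_floor (by exact_mod_cast hr2.le)
  have hnr : (n:ℝ) ≤ r := Nat.floor_le hr0
  have hrn : r < n + 1 := Nat.lt_floor_add_one r
  have hnpos : (0:ℝ) < n := by
    have : (2:ℝ) ≤ n := by exact_mod_cast hn2
    linarith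
  set c : ℕ → EuclideanSpace ℝ (Fin 3) := fun k => rot3 (Real.pi * k / n) x₀ with hc
  have hint_ball : ∀ k, ∫ x in Metric.ball (c k) 1, ρ x = ∫ x in Metric.ball x₀ 1, ρ x :=
    fun k => integral_ball_rot ρ hax _ x₀
  -- pairwise distance bound
  have hdist : ∀ j k : ℕ, j < n → k < n → j ≠ k → 2 ≤ dist (c j) (c k) := by
    intro j k hjn hkn hjk
    have hdd := dist_rot3_rot3 (Real.pi * j / n) (Real.pi * k / n) x₀
    set ψ : ℝ := (Real.pi * j / n - Real.pi * k / n) / 2 with hψ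
    set d : ℝ := |(j:ℝ) - k| with hd
    have hd1 : (1:ℝ) ≤ d := by
      have h0 : (j:ℤ) - k ≠ 0 := sub_ne_zero.2 (by exact_mod_cast hjk)
      have h := Int.one_le_abs h0
      have h' : (1:ℝ) ≤ |((j:ℤ) - k : ℤ)| := by exact_mod_cast h
      push_cast at h'
      exact h'
    have hdn : d ≤ (n:ℝ) - 1 := by
      have hj' : (j:ℝ) + 1 ≤ n := by exact_mod_cast hjn
      have hk' : (k:ℝ) + 1 ≤ n := by exact_mod_cast hkn
      have hj0 : (0:ℝ) ≤ j := Nat.cast_nonneg j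
      have hk0 : (0:ℝ) ≤ k := Nat.cast_nonneg k
      rw [hd, abs_le]
      constructor <;> linarith
    have hψabs : |ψ| = Real.pi * d / (2 * n) := by
      rw [hψ, hd]
      rw [abs_div, abs_of_nonneg (by norm_num : (0:ℝ) ≤ 2)]
      rw [show Real.pi * j / n - Real.pi * k / n = (Real.pi / n) * ((j:ℝ) - k) by ring,
        abs_mul, abs_of_nonneg (by positivity : (0:ℝ) ≤ Real.pi / n)]
      ring
    have hπ : 0 < Real.pi := Real.pi_pos
    have htle : |ψ| ≤ Real.pi / 2 := by
      rw [hψabs, div_le_div_iff₀ (by positivity) (by norm_num)]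
      nlinarith
    have htge : Real.pi / (2 * n) ≤ |ψ| := by
      rw [hψabs, show Real.pi / (2 * (n:ℝ)) = Real.pi * 1 / (2 * n) by ring]
      gcongr
    have hsin1 : (1:ℝ) / n ≤ Real.sin (Real.pi / (2 * n)) := by
      have h := Real.mul_le_sin (x := Real.pi / (2 * n)) (by positivity)
        (by
          rw [div_le_div_iff₀ (by positivity) (by norm_num)]
          nlinarith)
      calc (1:ℝ) / n = 2 / Real.pi * (Real.pi / (2 * n)) := by
            field_simp
          _ ≤ Real.sin (Real.pi / (2 * n)) := h
    have hsin2 : Real.sin (Real.pi / (2 * n)) ≤ Real.sin |ψ| :=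
      Real.sin_le_sin_of_le_of_le_pi_div_two
        (by
          have h0 : (0:ℝ) ≤ Real.pi / (2 * n) := by positivity
          linarith [Real.pi_pos]) htle htge
    have habs : Real.sin |ψ| = |Real.sin ψ| := by
      rcases le_or_gt 0 ψ with h | h
      · rw [abs_of_nonneg h, abs_of_nonneg (Real.sin_nonneg_of_nonneg_of_le_pi h
          (by linarith [le_abs_self ψ]))]
      · rw [abs_of_neg h, Real.sin_neg,
          abs_of_nonpos (Real.sin_nonpos_of_nonpos_of_neg_pi_le h.le
            (by linarith [neg_abs_le ψ]))]
    have hrr : (n:ℝ) * (1 / n) = 1 := by field_simp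
    calc (2:ℝ) = 2 * ((n:ℝ) * (1 / n)) := by rw [hrr]; ring
        _ ≤ 2 * (r * |Real.sin ψ|) := by
            have h1 : (1:ℝ) / n ≤ |Real.sin ψ| := by
              rw [← habs]; exact le_trans hsin1 hsin2
            have h2 : (0:ℝ) ≤ 1 / n := by positivity
            have h5 : (0:ℝ) ≤ r := hr0
            have h6 := mul_le_mul hnr h1 h2 h5
            linarith
        _ = 2 * r * |Real.sin ψ| := by ring
        _ = dist (c j) (c k) := by rw [← hrdef] at hdd; exact hdd.symm
  -- disjointness
  have hdisj : (↑(Finset.range n) : Set ℕ).Pairwise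
      (Function.onFun Disjoint fun k => Metric.ball (c k) 1) := by
    intro j hj k hk hjk
    simp only [Finset.coe_range, Set.mem_Iio] at hj hk
    exact Metric.ball_disjoint_ball (by linarith [hdist j k hj hk hjk])
  have hsum := MeasureTheory.integral_biUnion_finset (μ := volume) (f := ρ) (Finset.range n)
    (fun k _ => measurableSet_ball) hdisj (fun k _ => hint.integrableOn)
  have hkey : (n:ℝ) * δ₀ ≤ M := by
    calc (n:ℝ) * δ₀ = ∑ _k ∈ Finset.range n, δ₀ := by
          rw [Finset.sum_const, Finset.card_range, nsmul_eq_mul]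
        _ ≤ ∑ k ∈ Finset.range n, ∫ x in Metric.ball (c k) 1, ρ x :=
          Finset.sum_le_sum fun k _ => by rw [hint_ball k]; exact hball
        _ = ∫ x in ⋃ k ∈ Finset.range n, Metric.ball (c k) 1, ρ x := hsum.symm
        _ ≤ ∫ x, ρ x := setIntegral_le_integral hint (Filter.Eventually.of_forall hρ0)
        _ = M := hM
  have hnle : (n:ℝ) ≤ M / δ₀ := (le_div_iff₀ hδpos).2 hkey
  linarith
end

section
/- Let γ ≥ 4/3 and γ ≤ 2. For all ρ, σ ≥ 0, (ρ^γ - σ^γ - γσ^(γ-1)(ρ - σ))/(γ-1) ≥ c₁ (max(ρ,σ))^(γ-2) (ρ - σ)² for some constant c₁ > 0 depending only on γ. -/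
open Real

/-- Gradient inequality for the concave function `x ↦ x ^ p`, `0 ≤ p ≤ 1`. -/
lemma rpow_grad_ineq {p a b : ℝ} (hp0 : 0 ≤ p) (hp1 : p ≤ 1) (ha : 0 ≤ a) (hab : a ≤ b) :
    p * b ^ (p - 1) * (b - a) ≤ b ^ p - a ^ p := by
  rcases eq_or_lt_of_le (ha.trans hab) with hb | hb
  · have ha0 : a = 0 := le_antisymm (hab.trans hb.ge) ha
    simp [← hb, ha0]
  · have hb' : (0:ℝ) < b := hb
    have hs : -1 ≤ a / b - 1 := by
      have : 0 ≤ a / b := div_nonneg ha hb'.le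
      linarith
    have key : (a / b) ^ p ≤ 1 + p * (a / b - 1) := by
      have := rpow_one_add_le_one_add_mul_self hs hp0 hp1
      simpa using this
    have hap : a ^ p = (a / b) ^ p * b ^ p := by
      rw [← Real.mul_rpow (div_nonneg ha hb'.le) hb'.le, div_mul_cancel₀ _ hb'.ne']
    have hbp : 0 < b ^ p := Real.rpow_pos_of_pos hb' p
    have hb1 : b ^ (p - 1) = b ^ p / b := by
      rw [Real.rpow_sub hb', Real.rpow_one]
    have h2 : a ^ p ≤ b ^ p + p * (a / b - 1) * b ^ p := by
      calc a ^ p = (a / b) ^ p * b ^ p := hap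
        _ ≤ (1 + p * (a / b - 1)) * b ^ p := by
            exact mul_le_mul_of_nonneg_right key hbp.le
        _ = b ^ p + p * (a / b - 1) * b ^ p := by ring
    have h3 : p * (a / b - 1) * b ^ p = -(p * b ^ (p - 1) * (b - a)) := by
      rw [hb1]; field_simp; ring
    linarith [h2, h3.le, h3.ge]

/-- The main quantitative estimate. -/
lemma bregman_aux (γ : ℝ) (h1 : 4 / 3 ≤ γ) (h2 : γ ≤ 2) (ρ σ : ℝ) (hρ : 0 ≤ ρ) (hσ : 0 ≤ σ) :
    γ * (γ - 1) / 2 * (max ρ σ) ^ (γ - 2) * (ρ - σ) ^ 2 ≤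
      ρ ^ γ - σ ^ γ - γ * σ ^ (γ - 1) * (ρ - σ) := by
  have hγ1 : (1:ℝ) ≤ γ := by linarith
  have hγ0 : (0:ℝ) < γ := by linarith
  have hγ1' : (0:ℝ) ≤ γ - 1 := by linarith
  have hγ2 : γ - 2 ≤ 0 := by linarith
  set M : ℝ := max ρ σ with hMdef
  set c : ℝ := γ * (γ - 1) / 2 * M ^ (γ - 2) with hcdef
  have hss : σ ^ (γ - 1) * σ = σ ^ γ := by
    rcases eq_or_lt_of_le hσ with h | h
    · rw [← h, Real.zero_rpow (by linarith : γ ≠ 0)]; ring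
    · rw [← Real.rpow_add_one h.ne' (γ - 1)]; ring_nf
  set g : ℝ → ℝ := fun x => x ^ γ - γ * σ ^ (γ - 1) * x - c * (x - σ) ^ 2 with hgdef
  have hg : ∀ x : ℝ, HasDerivAt g (γ * x ^ (γ - 1) - γ * σ ^ (γ - 1) - c * (2 * (x - σ))) x := by
    intro x
    have hd1 : HasDerivAt (fun x : ℝ => x ^ γ) (γ * x ^ (γ - 1)) x :=
      Real.hasDerivAt_rpow_const (Or.inr hγ1)
    have hd2 : HasDerivAt (fun x : ℝ => γ * σ ^ (γ - 1) * x) (γ * σ ^ (γ - 1)) x := by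
      simpa using (hasDerivAt_id x).const_mul (γ * σ ^ (γ - 1))
    have hd3 : HasDerivAt (fun x : ℝ => c * (x - σ) ^ 2) (c * (2 * (x - σ))) x := by
      have h := ((hasDerivAt_id x).sub_const σ).pow 2
      have h' := h.const_mul c
      simp only [id_eq] at h'
      refine h'.congr_deriv ?_
      push_cast
      ring
    exact (hd1.sub hd2).sub hd3
  rcases le_total σ ρ with hle | hle
  · -- ρ is the max
    have hMρ : M = ρ := max_eq_left hle
    have mono : MonotoneOn g (Set.Icc σ ρ) := by
      apply monotoneOn_of_deriv_nonneg (convex_Icc σ ρ)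
      · exact fun x _ => (hg x).continuousAt.continuousWithinAt
      · exact fun x _ => (hg x).differentiableAt.differentiableWithinAt
      · intro x hx
        rw [interior_Icc] at hx
        rw [(hg x).deriv]
        have hx0 : 0 < x := lt_of_le_of_lt hσ hx.1
        have hgr : (γ - 1) * x ^ ((γ - 1) - 1) * (x - σ) ≤ x ^ (γ - 1) - σ ^ (γ - 1) :=
          rpow_grad_ineq hγ1' (by linarith) hσ hx.1.le
        have hbase : M ^ (γ - 2) ≤ x ^ (γ - 2) :=
          Real.rpow_le_rpow_of_nonpos hx0 (by rw [hMρ]; exact hx.2.le) hγ2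
        have hxe : x ^ ((γ - 1) - 1) = x ^ (γ - 2) := by ring_nf
        rw [hxe] at hgr
        have hxs : 0 ≤ x - σ := by linarith [hx.1]
        have h5 : (γ - 1) * M ^ (γ - 2) * (x - σ) ≤ (γ - 1) * x ^ (γ - 2) * (x - σ) := by
          have := mul_le_mul_of_nonneg_right (mul_le_mul_of_nonneg_left hbase hγ1') hxs
          linarith
        have : c * (2 * (x - σ)) = γ * ((γ - 1) * M ^ (γ - 2) * (x - σ)) := by
          rw [hcdef]; ring
        rw [this]
        nlinarith [mul_le_mul_of_nonneg_left (h5.trans hgr) hγ0.le]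
    have hgs : g σ ≤ g ρ := mono ⟨le_refl σ, hle⟩ ⟨hle, le_refl ρ⟩ hle
    simp only [hgdef] at hgs
    nlinarith [hgs, hss]
  · -- σ is the max
    have hMσ : M = σ := max_eq_right hle
    have anti : AntitoneOn g (Set.Icc ρ σ) := by
      apply antitoneOn_of_deriv_nonpos (convex_Icc ρ σ)
      · exact fun x _ => (hg x).continuousAt.continuousWithinAt
      · exact fun x _ => (hg x).differentiableAt.differentiableWithinAt
      · intro x hx
        rw [interior_Icc] at hx
        rw [(hg x).deriv]
        have hx0 : 0 ≤ x := le_trans hρ hx.1.le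
        have hgr : (γ - 1) * σ ^ ((γ - 1) - 1) * (σ - x) ≤ σ ^ (γ - 1) - x ^ (γ - 1) :=
          rpow_grad_ineq hγ1' (by linarith) hx0 hx.2.le
        have hxe : σ ^ ((γ - 1) - 1) = σ ^ (γ - 2) := by ring_nf
        rw [hxe] at hgr
        have : c * (2 * (x - σ)) = -(γ * ((γ - 1) * σ ^ (γ - 2) * (σ - x))) := by
          rw [hcdef, hMσ]; ring
        rw [this]
        nlinarith [mul_le_mul_of_nonneg_left hgr hγ0.le]
    have hgs : g σ ≤ g ρ := anti ⟨le_refl ρ, hle⟩ ⟨hle, le_refl σ⟩ hle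
    simp only [hgdef] at hgs
    nlinarith [hgs, hss]

/-- Coercivity of the Bregman divergence of ρ ↦ ρ^γ/(γ−1) for 4/3 ≤ γ ≤ 2. -/
theorem bregman_coercivity (γ : ℝ) (h1 : 4 / 3 ≤ γ) (h2 : γ ≤ 2) :
    ∃ c₁ : ℝ, 0 < c₁ ∧
      ∀ ρ σ : ℝ, 0 ≤ ρ → 0 ≤ σ →
        c₁ * max ρ σ ^ (γ - 2) * (ρ - σ) ^ 2 ≤
          (ρ ^ γ - σ ^ γ - γ * σ ^ (γ - 1) * (ρ - σ)) / (γ - 1) := by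
  refine ⟨2/3, by norm_num, fun ρ σ hρ hσ => ?_⟩
  have hγ1 : (0:ℝ) < γ - 1 := by linarith
  rw [le_div_iff₀ hγ1]
  have key := bregman_aux γ h1 h2 ρ σ hρ hσ
  have hX : 0 ≤ (max ρ σ) ^ (γ - 2) * (ρ - σ) ^ 2 :=
    mul_nonneg (Real.rpow_nonneg (le_max_of_le_left hρ) _) (sq_nonneg _)
  nlinarith [key, hX, mul_le_mul_of_nonneg_right
    (show 2/3 * (γ - 1) ≤ γ * (γ - 1) / 2 by nlinarith) hX]
end
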